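/- Let $\Omega\subset\mathbb{R}^d$ be a bounded domain, $q>2$, and suppose $u$ satisfies, for all balls with $B(x,2r)\subset\Omega$ and exponents $q_1<q_2$ with $\frac{1}{q_2}=\frac{1}{q_1}-\frac{2}{d}$, the local estimate $\left(\fint_{B(x,r)}|u|^{q_2}\right)^{1/q_2} \le C\left[\left(\fint_{B(x,2r)}|u|^2\right)^{1/2} + r^2\left(\fint_{B(x,2r)}|F-\lambda u|^{q_1}\right)^{1/q_1}\right]$ together with its $L^\infty$ endpoint. Then by a bootstrap argument, whenever $B(x,2r)\subset\Omega$ and $F\in L^\infty(\Omega)$, $\|u\|_{L^\infty(B(x,r))} \le C(1+r^2|\lambda|)^{d+1}\left[\left(\fint_{B(x,2r)}|u|^2\right)^{1/2} + r^2\|F\|_{L^\infty(\Omega)}\right]$, where $C$ depends only on $d$ and $q$. -/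

import Mathlib

/-!
At a point `y` and a scale `ρ`, the `L^∞` estimate on `B(y, 2ρ)` bounds `|u(y)|` by
`C₁ (r/ρ)^d (⨍_{B(x,2r)} |u|²)^{1/2} + C₁ ρ² (‖F‖_∞ + |λ| sup_{B(y,2ρ)} |u|)`, the `L²` average over
the small ball being at most `(r/ρ)^d` times the one over `B(x, 2r)`. Once `ρ ≤ r / s` with
`s ≈ 2^d (1 + r²|λ|)`, the coefficient of the supremum is small enough to be absorbed: on concentric
balls `B(x, t_k)` with `t_{k+1} = t_k + 2ρ_k` and `ρ_k = 2^{-k} r / s`, the bound on `B(x, t_{k+1})`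
enters the one on `B(x, t_k)` with a coefficient `θ` such that `2^d θ ≤ 1/2`, which beats the growth
`2^{kd}` of the main term.
Starting from the local boundedness of `u` on a compact neighbourhood, which the estimate itself
provides, the iteration yields `|u(y)| ≲ s^d (⨍ |u|²)^{1/2} + r² ‖F‖_∞`.
-/

open MeasureTheory Metric Complex

noncomputable section

/-- partial derivative in direction `i`. -/
def pd {n : ℕ} (i : Fin n) (f : EuclideanSpace ℝ (Fin n) → ℂ) (x : EuclideanSpace ℝ (Fin n)) : ℂ :=
  fderiv ℝ f x (EuclideanSpace.single i 1)

/-- Laplacian. -/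
def lap {n : ℕ} (f : EuclideanSpace ℝ (Fin n) → ℂ) (x : EuclideanSpace ℝ (Fin n)) : ℂ :=
  ∑ i, pd i (pd i f) x

/-- `L^q` norm over a set. -/
def Lq {n : ℕ} (q : ℝ) (s : Set (EuclideanSpace ℝ (Fin n))) (f : EuclideanSpace ℝ (Fin n) → ℝ) : ℝ :=
  (eLpNorm f (ENNReal.ofReal q) (volume.restrict s)).toReal

/-- pointwise euclidean norm of a vector field. -/
def vnorm {n d : ℕ} (u : Fin d → EuclideanSpace ℝ (Fin n) → ℂ) (x : EuclideanSpace ℝ (Fin n)) : ℝ :=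
  Real.sqrt (∑ i, ‖u i x‖ ^ 2)

/-- pointwise norm of the full gradient of a vector field. -/
def gnorm {n d : ℕ} (u : Fin d → EuclideanSpace ℝ (Fin n) → ℂ) (x : EuclideanSpace ℝ (Fin n)) : ℝ :=
  Real.sqrt (∑ i, ∑ j, ‖pd j (u i) x‖ ^ 2)

def toE {n : ℕ} (f : Fin n → ℝ) : EuclideanSpace ℝ (Fin n) := (EuclideanSpace.equiv (Fin n) ℝ).symm f

/-- the point `(x', t)` of `ℝ^{d+1}`. -/
def emb {d : ℕ} (x' : EuclideanSpace ℝ (Fin d)) (t : ℝ) : EuclideanSpace ℝ (Fin (d+1)) :=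
  toE (Fin.snoc (fun i => x' i) t)

/-- region above the graph of `ψ`. -/
def Hpsi {d : ℕ} (ψ : EuclideanSpace ℝ (Fin d) → ℝ) : Set (EuclideanSpace ℝ (Fin (d+1))) :=
  {z | ψ (toE fun i => z i.castSucc) < z (Fin.last d)}

/-- surface measure on the graph of `ψ` (pushforward of Lebesgue measure). -/
def smeasure {d : ℕ} (ψ : EuclideanSpace ℝ (Fin d) → ℝ) : Measure (EuclideanSpace ℝ (Fin (d+1))) :=
  Measure.map (fun x' => emb x' (ψ x')) volume

/-- region above a Lipschitz graph, placed at `x₀` in direction `n`. -/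
def AboveGraph {d : ℕ} (x₀ n : EuclideanSpace ℝ (Fin d)) (ψ : EuclideanSpace ℝ (Fin d) → ℝ) :
    Set (EuclideanSpace ℝ (Fin d)) :=
  {y | ψ ((y - x₀) - (inner ℝ (y - x₀) n : ℝ) • n) < (inner ℝ (y - x₀) n : ℝ)}

/-- bounded Lipschitz domain with character `(r₀, M)`. -/
def IsBoundedLipschitzDomainWith {d : ℕ} (r₀ M : ℝ) (Ω : Set (EuclideanSpace ℝ (Fin d))) : Prop :=
  IsOpen Ω ∧ IsConnected Ω ∧ Bornology.IsBounded Ω ∧ 0 < r₀ ∧ 0 ≤ M ∧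
    ∀ x ∈ frontier Ω, ∃ (n : EuclideanSpace ℝ (Fin d)) (ψ : EuclideanSpace ℝ (Fin d) → ℝ),
      ‖n‖ = 1 ∧ LipschitzWith (Real.toNNReal M) ψ ∧ ψ 0 = 0 ∧
      Ω ∩ ball x r₀ = AboveGraph x n ψ ∩ ball x r₀

def IsBoundedLipschitzDomain {d : ℕ} (Ω : Set (EuclideanSpace ℝ (Fin d))) : Prop :=
  ∃ r₀ M : ℝ, IsBoundedLipschitzDomainWith r₀ M Ω


open Filter Topology
open scoped ENNReal

lemma vnorm_nonneg {n d : ℕ} (u : Fin d → EuclideanSpace ℝ (Fin n) → ℂ)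
    (x : EuclideanSpace ℝ (Fin n)) : 0 ≤ vnorm u x :=
  Real.sqrt_nonneg _

lemma vnorm_sub_mul_le {n d : ℕ} (F u : Fin d → EuclideanSpace ℝ (Fin n) → ℂ) (lam : ℂ)
    (x : EuclideanSpace ℝ (Fin n)) :
    vnorm (fun i z => F i z - lam * u i z) x ≤ vnorm F x + ‖lam‖ * vnorm u x := by
  have hnorm (v : Fin d → EuclideanSpace ℝ (Fin n) → ℂ) :
      vnorm v x = ‖WithLp.toLp 2 fun i => v i x‖ := by
    simp [vnorm, EuclideanSpace.norm_eq]
  have hsplit : (WithLp.toLp 2 fun i => F i x - lam * u i x : EuclideanSpace ℂ (Fin d)) =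
      WithLp.toLp 2 (fun i => F i x) - lam • WithLp.toLp 2 fun i => u i x := by
    ext i
    simp
  rw [hnorm, hnorm, hnorm, hsplit, ← norm_smul]
  exact norm_sub_le _ _

section Average

variable {α : Type*} [MeasurableSpace α] {μ : Measure α} {s t : Set α} {f : α → ℝ} {c : ℝ}

lemma setAverage_nonneg_of_nonneg (hs : MeasurableSet s) (hf : ∀ z ∈ s, 0 ≤ f z) :
    0 ≤ ⨍ z in s, f z ∂μ := by
  rw [setAverage_eq]
  exact smul_nonneg (by positivity) (setIntegral_nonneg hs hf)

lemma setAverage_le_of_forall_le (hs : MeasurableSet s) (hμs : μ s ≠ ∞) (hc : 0 ≤ c)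
    (hf₀ : ∀ z ∈ s, 0 ≤ f z) (hfc : ∀ z ∈ s, f z ≤ c) : ⨍ z in s, f z ∂μ ≤ c := by
  have hint : ∫ z in s, f z ∂μ ≤ μ.real s * c :=
    calc ∫ z in s, f z ∂μ ≤ ∫ _ in s, c ∂μ :=
          integral_mono_of_nonneg ((ae_restrict_iff' hs).2 (ae_of_all _ hf₀))
            (integrableOn_const hμs) ((ae_restrict_iff' hs).2 (ae_of_all _ hfc))
      _ = μ.real s * c := by rw [setIntegral_const, smul_eq_mul]
  rw [setAverage_eq, smul_eq_mul]
  rcases eq_or_ne (μ.real s) 0 with h0 | h0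
  · simp [h0, hc]
  · calc (μ.real s)⁻¹ * ∫ z in s, f z ∂μ ≤ (μ.real s)⁻¹ * (μ.real s * c) := by gcongr
      _ = c := by field_simp

lemma setAverage_le_mul_setAverage_of_subset (ht : MeasurableSet t) (hμt : μ t ≠ ∞)
    (hst : s ⊆ t) (hs : μ.real s ≠ 0) (hf : IntegrableOn f t μ) (hf₀ : ∀ z ∈ t, 0 ≤ f z) :
    ⨍ z in s, f z ∂μ ≤ μ.real t / μ.real s * ⨍ z in t, f z ∂μ := by
  have ht₀ : μ.real t ≠ 0 :=
    (lt_of_lt_of_le (lt_of_le_of_ne measureReal_nonneg hs.symm) (measureReal_mono hst hμt)).ne'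
  have hint : ∫ z in s, f z ∂μ ≤ ∫ z in t, f z ∂μ :=
    setIntegral_mono_set hf ((ae_restrict_iff' ht).2 (ae_of_all _ hf₀)) hst.eventuallyLE
  rw [setAverage_eq, setAverage_eq, smul_eq_mul, smul_eq_mul]
  calc (μ.real s)⁻¹ * ∫ z in s, f z ∂μ ≤ (μ.real s)⁻¹ * ∫ z in t, f z ∂μ := by gcongr
    _ = μ.real t / μ.real s * ((μ.real t)⁻¹ * ∫ z in t, f z ∂μ) := by field_simp

end Average

lemma setAverage_ball_le_mul_setAverage_ball {E : Type*} [NormedAddCommGroup E]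
    [NormedSpace ℝ E] [FiniteDimensional ℝ E] [MeasurableSpace E] [BorelSpace E]
    (μ : Measure E) [μ.IsAddHaarMeasure] {x y : E} {ρ R : ℝ} (hρ : 0 < ρ)
    (hsub : ball y ρ ⊆ ball x R) {f : E → ℝ} (hf : IntegrableOn f (ball x R) μ)
    (hf₀ : ∀ z ∈ ball x R, 0 ≤ f z) :
    ⨍ z in ball y ρ, f z ∂μ ≤ (R / ρ) ^ Module.finrank ℝ E * ⨍ z in ball x R, f z ∂μ := by
  have hR : 0 < R := (dist_nonneg.trans_lt (mem_ball.1 (hsub (mem_ball_self hρ))))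
  have hreal {z : E} {a : ℝ} (ha : 0 < a) :
      μ.real (ball z a) = a ^ Module.finrank ℝ E * μ.real (ball 0 1) := by
    rw [measureReal_def, Measure.addHaar_ball_of_pos μ z ha, ENNReal.toReal_mul,
      ENNReal.toReal_ofReal (by positivity), measureReal_def]
  have hunit : 0 < μ.real (ball (0 : E) 1) :=
    ENNReal.toReal_pos (measure_ball_pos μ _ one_pos).ne' measure_ball_lt_top.ne
  have hratio : μ.real (ball x R) / μ.real (ball y ρ) = (R / ρ) ^ Module.finrank ℝ E := by
    rw [hreal hR, hreal hρ, div_pow]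
    field_simp
  rw [← hratio]
  exact setAverage_le_mul_setAverage_of_subset measurableSet_ball measure_ball_lt_top.ne hsub
    (by rw [hreal hρ]; positivity) hf hf₀

lemma IsCompact.bddAbove_image_of_locally {X : Type*} [TopologicalSpace X] {K : Set X}
    (hK : IsCompact K) {v : X → ℝ} (h : ∀ z ∈ K, ∃ U ∈ 𝓝 z, BddAbove (v '' U)) :
    BddAbove (v '' K) := by
  refine hK.induction_on (p := fun S => BddAbove (v '' S)) (by simp)
    (fun _ _ hst ht => ht.mono (Set.image_mono hst))
    (fun _ _ hs ht => by rw [Set.image_union]; exact hs.union ht) fun z hz => ?_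
  obtain ⟨U, hU, hb⟩ := h z hz
  exact ⟨U, mem_nhdsWithin_of_mem_nhds hU, hb⟩

lemma le_two_mul_of_absorption {X : Type*} {S : ℕ → Set X} {v : X → ℝ} {M E Q θ A : ℝ}
    (hM₀ : 0 ≤ M) (hE : 0 ≤ E) (hQ : 0 ≤ Q) (hA : 1 ≤ A) (hθ : 0 ≤ θ) (hθA : θ * A ≤ 1 / 2)
    (hM : ∀ k, ∀ z ∈ S k, v z ≤ M)
    (hstep : ∀ k K, 0 ≤ K → (∀ z ∈ S (k + 1), v z ≤ K) →
      ∀ z ∈ S k, v z ≤ E * A ^ k + Q + θ * K) :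
    ∀ z ∈ S 0, v z ≤ 2 * (E + Q) := by
  have hθ_half : θ ≤ 1 / 2 := by nlinarith
  have hiter : ∀ N k, ∀ z ∈ S k, v z ≤ 2 * (E * A ^ k + Q) + M / 2 ^ N := by
    intro N
    induction N with
    | zero =>
      intro k z hz
      have : 0 ≤ E * A ^ k := by positivity
      linarith [hM k z hz, div_one M, pow_zero (2 : ℝ)]
    | succ N ih =>
      intro k z hz
      refine (hstep k _ (by positivity) (ih (k + 1)) z hz).trans ?_
      have hE' : θ * (E * A ^ (k + 1)) ≤ 1 / 2 * (E * A ^ k) :=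
        calc θ * (E * A ^ (k + 1)) = θ * A * (E * A ^ k) := by ring
          _ ≤ 1 / 2 * (E * A ^ k) := by gcongr
      have hQ' : θ * Q ≤ 1 / 2 * Q := by gcongr
      have hM' : θ * (M / 2 ^ N) ≤ 1 / 2 * (M / 2 ^ N) := by gcongr
      have hhalf : M / 2 ^ (N + 1) = 1 / 2 * (M / 2 ^ N) := by ring
      linarith
  intro z hz
  have hlim : Tendsto (fun N : ℕ => 2 * (E + Q) + M / 2 ^ N) atTop (𝓝 (2 * (E + Q))) := by
    simpa using (tendsto_const_nhds (x := 2 * (E + Q))).add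
      ((tendsto_const_nhds (x := M)).div_atTop (tendsto_pow_atTop_atTop_of_one_lt one_lt_two))
  exact ge_of_tendsto' hlim fun N => by simpa using hiter N 0 z hz

def HasInteriorLinftyEstimate {d : ℕ} (C₁ q : ℝ) (Ω : Set (EuclideanSpace ℝ (Fin d))) (lam : ℂ)
    (u F : Fin d → EuclideanSpace ℝ (Fin d) → ℂ) : Prop :=
  ∀ (x : EuclideanSpace ℝ (Fin d)) (r : ℝ), 0 < r → ball x (2 * r) ⊆ Ω →
    ∀ y ∈ ball x r, vnorm u y ≤
      C₁ * ((⨍ z in ball x (2 * r), vnorm u z ^ 2) ^ ((1 : ℝ) / 2) +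
        r ^ 2 * (⨍ z in ball x (2 * r),
          vnorm (fun i w => F i w - lam * u i w) z ^ q) ^ (1 / q))

namespace HasInteriorLinftyEstimate

variable {d : ℕ} {C₁ q MF : ℝ} {Ω : Set (EuclideanSpace ℝ (Fin d))} {lam : ℂ}
  {u F : Fin d → EuclideanSpace ℝ (Fin d) → ℂ} {x y : EuclideanSpace ℝ (Fin d)} {r ρ K : ℝ}

lemma bddAbove_image (h : HasInteriorLinftyEstimate C₁ q Ω lam u F) (hΩ : IsOpen Ω)
    {S : Set (EuclideanSpace ℝ (Fin d))} (hS : IsCompact S) (hSΩ : S ⊆ Ω) :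
    BddAbove (vnorm u '' S) := by
  refine hS.bddAbove_image_of_locally fun z hz => ?_
  obtain ⟨ε, hε, hεΩ⟩ := Metric.isOpen_iff.1 hΩ z (hSΩ hz)
  -- the right-hand side of the estimate is a real number whether or not `F - λu` is in `L^q`
  exact ⟨ball z (ε / 2), ball_mem_nhds z (by positivity), _, Set.forall_mem_image.2 fun w hw =>
    h z (ε / 2) (by positivity) (by rwa [mul_div_cancel₀ ε two_ne_zero]) w hw⟩

lemma vnorm_le_of_forall_le (h : HasInteriorLinftyEstimate C₁ q Ω lam u F) (hq : 0 < q)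
    (hC₁ : 0 ≤ C₁) (hF : ∀ z ∈ Ω, vnorm F z ≤ MF) (hρ : 0 < ρ) (hyΩ : ball y (2 * ρ) ⊆ Ω)
    (hK : 0 ≤ K) (hKu : ∀ z ∈ ball y (2 * ρ), vnorm u z ≤ K) :
    vnorm u y ≤ C₁ * ((⨍ z in ball y (2 * ρ), vnorm u z ^ 2) ^ ((1 : ℝ) / 2) +
      ρ ^ 2 * (MF + ‖lam‖ * K)) := by
  have hMF : 0 ≤ MF := (vnorm_nonneg F y).trans (hF y (hyΩ (mem_ball_self (by positivity))))
  have hbound : 0 ≤ MF + ‖lam‖ * K := by positivity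
  have hpt : ∀ z ∈ ball y (2 * ρ),
      vnorm (fun i w => F i w - lam * u i w) z ^ q ≤ (MF + ‖lam‖ * K) ^ q := by
    intro z hz
    refine Real.rpow_le_rpow (vnorm_nonneg _ _) ((vnorm_sub_mul_le F u lam z).trans ?_) hq.le
    gcongr
    exacts [hF z (hyΩ hz), hKu z hz]
  have havg : (⨍ z in ball y (2 * ρ), vnorm (fun i w => F i w - lam * u i w) z ^ q) ^ (1 / q)
      ≤ MF + ‖lam‖ * K :=
    calc _ ≤ ((MF + ‖lam‖ * K) ^ q) ^ (1 / q) :=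
          Real.rpow_le_rpow
            (setAverage_nonneg_of_nonneg measurableSet_ball fun z _ =>
              Real.rpow_nonneg (vnorm_nonneg _ z) q)
            (setAverage_le_of_forall_le measurableSet_ball measure_ball_lt_top.ne
              (by positivity) (fun z _ => Real.rpow_nonneg (vnorm_nonneg _ z) q) hpt)
            (by positivity)
      _ = MF + ‖lam‖ * K := by rw [one_div, Real.rpow_rpow_inv hbound hq.ne']
  calc vnorm u y ≤ _ := h y ρ hρ hyΩ y (mem_ball_self hρ)
    _ ≤ _ := by gcongr

lemma vnorm_le_of_ball_subset (h : HasInteriorLinftyEstimate C₁ q Ω lam u F) (hq : 0 < q)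
    (hC₁ : 0 ≤ C₁) (hF : ∀ z ∈ Ω, vnorm F z ≤ MF) (hball : ball x (2 * r) ⊆ Ω)
    (hInt : IntegrableOn (fun z => vnorm u z ^ 2) (ball x (2 * r))) (hρ : 0 < ρ) (hρr : ρ ≤ r)
    (hsub : ball y (2 * ρ) ⊆ ball x (2 * r)) (hK : 0 ≤ K)
    (hKu : ∀ z ∈ ball y (2 * ρ), vnorm u z ≤ K) :
    vnorm u y ≤ C₁ * ((r / ρ) ^ d * (⨍ z in ball x (2 * r), vnorm u z ^ 2) ^ ((1 : ℝ) / 2) +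
      ρ ^ 2 * (MF + ‖lam‖ * K)) := by
  refine (h.vnorm_le_of_forall_le hq hC₁ hF hρ (hsub.trans hball) hK hKu).trans ?_
  gcongr
  have hcmp := setAverage_ball_le_mul_setAverage_ball volume (by positivity) hsub hInt
    fun z _ => by positivity
  rw [finrank_euclideanSpace_fin, mul_div_mul_left r ρ two_ne_zero] at hcmp
  have hratio : 1 ≤ (r / ρ) ^ d := one_le_pow₀ ((one_le_div hρ).2 hρr)
  have hbig : 0 ≤ ⨍ z in ball x (2 * r), vnorm u z ^ 2 :=
    setAverage_nonneg_of_nonneg measurableSet_ball fun z _ => by positivity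
  calc (⨍ z in ball y (2 * ρ), vnorm u z ^ 2) ^ ((1 : ℝ) / 2)
      ≤ ((r / ρ) ^ d * ⨍ z in ball x (2 * r), vnorm u z ^ 2) ^ ((1 : ℝ) / 2) :=
        Real.rpow_le_rpow (setAverage_nonneg_of_nonneg measurableSet_ball fun z _ => by positivity)
          hcmp (by norm_num)
    _ = ((r / ρ) ^ d) ^ ((1 : ℝ) / 2) * (⨍ z in ball x (2 * r), vnorm u z ^ 2) ^ ((1 : ℝ) / 2) :=
        Real.mul_rpow (by positivity) hbig
    _ ≤ _ := by gcongr; exact Real.rpow_le_self_of_one_le hratio (by norm_num)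

lemma vnorm_le_of_scale (h : HasInteriorLinftyEstimate C₁ q Ω lam u F) (hΩ : IsOpen Ω)
    (hq : 0 < q) (hC₁ : 0 ≤ C₁) (hF : ∀ z ∈ Ω, vnorm F z ≤ MF) (hr : 0 < r)
    (hball : ball x (2 * r) ⊆ Ω) (hInt : IntegrableOn (fun z => vnorm u z ^ 2) (ball x (2 * r)))
    (hy : y ∈ ball x r) {s : ℝ} (hs : 8 ≤ s) (hθ : C₁ * (r / s) ^ 2 * ‖lam‖ * 2 ^ d ≤ 1 / 2) :
    vnorm u y ≤ 2 * (C₁ * s ^ d * (⨍ z in ball x (2 * r), vnorm u z ^ 2) ^ ((1 : ℝ) / 2) +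
      C₁ * (r / s) ^ 2 * MF) := by
  set sV := (⨍ z in ball x (2 * r), vnorm u z ^ 2) ^ ((1 : ℝ) / 2)
  have hsV : 0 ≤ sV := Real.rpow_nonneg
    (setAverage_nonneg_of_nonneg measurableSet_ball fun z _ => by positivity) _
  have hMF : 0 ≤ MF := (vnorm_nonneg F x).trans (hF x (hball (mem_ball_self (by positivity))))
  set ρ : ℕ → ℝ := fun k => r / s / 2 ^ k
  set t : ℕ → ℝ := fun k => r + 4 * (r / s) - 4 * ρ k
  have hρ : ∀ k, 0 < ρ k := fun k => by positivity
  have hρs : ∀ k, ρ k ≤ r / s := fun k => div_le_self (by positivity) (one_le_pow₀ one_le_two)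
  have hrs : r / s ≤ r / 8 := div_le_div_of_nonneg_left hr.le (by norm_num) hs
  have ht_succ : ∀ k, t (k + 1) = t k + 2 * ρ k := fun k => by simp only [t, ρ, pow_succ]; ring
  have ht_le : ∀ k, t k ≤ 3 * r / 2 := fun k => by simp only [t]; linarith [hρ k]
  have ht_zero : t 0 = r := by simp [t, ρ]
  obtain ⟨M, hM⟩ := h.bddAbove_image hΩ (isCompact_closedBall x (3 * r / 2))
    ((closedBall_subset_ball (by linarith)).trans hball)
  have hM' : ∀ k, ∀ z ∈ closedBall x (t k), vnorm u z ≤ M := fun k z hz =>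
    hM ⟨z, closedBall_subset_closedBall (ht_le k) hz, rfl⟩
  have hM₀ : 0 ≤ M :=
    (vnorm_nonneg u x).trans (hM' 0 x (mem_closedBall_self (by rw [ht_zero]; exact hr.le)))
  have hstep : ∀ k K, 0 ≤ K → (∀ z ∈ closedBall x (t (k + 1)), vnorm u z ≤ K) →
      ∀ z ∈ closedBall x (t k), vnorm u z ≤
        C₁ * s ^ d * sV * (2 ^ d) ^ k + C₁ * (r / s) ^ 2 * MF + C₁ * (r / s) ^ 2 * ‖lam‖ * K := by
    intro k K hK hKu z hz
    have hsub : ball z (2 * ρ k) ⊆ closedBall x (t (k + 1)) :=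
      (ball_subset_ball' (by rw [ht_succ]; linarith [mem_closedBall.1 hz])).trans
        ball_subset_closedBall
    refine (h.vnorm_le_of_ball_subset hq hC₁ hF hball hInt (hρ k) (by linarith [hρs k])
      (hsub.trans (closedBall_subset_ball (by linarith [ht_le (k + 1)]))) hK
      fun w hw => hKu w (hsub hw)).trans ?_
    have hratio : r / ρ k = s * 2 ^ k := by simp only [ρ]; field_simp
    have hρ2 : ρ k ^ 2 ≤ (r / s) ^ 2 := pow_le_pow_left₀ (hρ k).le (hρs k) 2
    rw [hratio, mul_pow, ← pow_mul, mul_comm k d, pow_mul]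
    calc _ = C₁ * (s ^ d * (2 ^ d) ^ k * sV + ρ k ^ 2 * (MF + ‖lam‖ * K)) := rfl
      _ ≤ C₁ * (s ^ d * (2 ^ d) ^ k * sV + (r / s) ^ 2 * (MF + ‖lam‖ * K)) := by gcongr
      _ = _ := by ring
  exact le_two_mul_of_absorption (S := fun k => closedBall x (t k)) hM₀ (by positivity)
    (by positivity) (one_le_pow₀ one_le_two) (by positivity) hθ hM' hstep y
    (by rw [ht_zero]; exact ball_subset_closedBall hy)

lemma vnorm_le (h : HasInteriorLinftyEstimate C₁ q Ω lam u F) (hΩ : IsOpen Ω) (hq : 0 < q)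
    (hC₁ : 0 ≤ C₁) (hF : ∀ z ∈ Ω, vnorm F z ≤ MF) (hr : 0 < r) (hball : ball x (2 * r) ⊆ Ω)
    (hInt : IntegrableOn (fun z => vnorm u z ^ 2) (ball x (2 * r))) (hy : y ∈ ball x r) :
    vnorm u y ≤ 2 * C₁ * ((2 ^ (d + 3) * (C₁ + 1)) ^ d + 1) * (1 + r ^ 2 * ‖lam‖) ^ (d + 1) *
      ((⨍ z in ball x (2 * r), vnorm u z ^ 2) ^ ((1 : ℝ) / 2) + r ^ 2 * MF) := by
  set L := ‖lam‖
  set sV := (⨍ z in ball x (2 * r), vnorm u z ^ 2) ^ ((1 : ℝ) / 2)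
  have hsV : 0 ≤ sV := Real.rpow_nonneg
    (setAverage_nonneg_of_nonneg measurableSet_ball fun z _ => by positivity) _
  have hMF : 0 ≤ MF := (vnorm_nonneg F x).trans (hF x (hball (mem_ball_self (by positivity))))
  have hX : 1 ≤ 1 + r ^ 2 * L := le_add_of_nonneg_right (by positivity)
  -- `s` makes the absorption coefficient `C₁ (r/s)² |λ|` at most `2^{-d-3}`
  set c : ℝ := 2 ^ (d + 3) * (C₁ + 1)
  set s := c * (1 + r ^ 2 * L)
  have hs_eq : s = 8 * (2 ^ d * (C₁ * r ^ 2 * L)) + 8 * 2 ^ d * (C₁ + 1 + r ^ 2 * L) := by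
    simp only [s, c]; ring
  have hs_ge : 8 * (2 ^ d * (C₁ * r ^ 2 * L)) ≤ s := by
    rw [hs_eq]; exact le_add_of_nonneg_right (by positivity)
  have hs : 8 ≤ s := by
    have : 1 ≤ 2 ^ d * (C₁ + 1 + r ^ 2 * L) :=
      one_le_mul_of_one_le_of_one_le (one_le_pow₀ one_le_two) (by linarith)
    have : 0 ≤ 2 ^ d * (C₁ * r ^ 2 * L) := by positivity
    linarith
  have hθ : C₁ * (r / s) ^ 2 * L * 2 ^ d ≤ 1 / 2 := by
    rw [show C₁ * (r / s) ^ 2 * L * 2 ^ d = 2 ^ d * (C₁ * r ^ 2 * L) / s ^ 2 by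
      rw [div_pow]; ring, div_le_iff₀ (by positivity)]
    nlinarith
  set B := (c ^ d + 1) * (1 + r ^ 2 * L) ^ (d + 1)
  have hB : 1 ≤ B := one_le_mul_of_one_le_of_one_le (by simp; positivity) (one_le_pow₀ hX)
  have hsB : s ^ d ≤ B :=
    calc s ^ d = c ^ d * (1 + r ^ 2 * L) ^ d := mul_pow _ _ _
      _ ≤ (c ^ d + 1) * (1 + r ^ 2 * L) ^ (d + 1) := by
        gcongr
        · linarith
        · omega
  have hrB : (r / s) ^ 2 ≤ B * r ^ 2 :=
    calc (r / s) ^ 2 ≤ r ^ 2 := by gcongr; exact div_le_self hr.le (by linarith)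
      _ ≤ B * r ^ 2 := le_mul_of_one_le_left (by positivity) hB
  calc vnorm u y ≤ 2 * (C₁ * s ^ d * sV + C₁ * (r / s) ^ 2 * MF) :=
        h.vnorm_le_of_scale hΩ hq hC₁ hF hr hball hInt hy hs hθ
    _ ≤ 2 * (C₁ * B * sV + C₁ * (B * r ^ 2) * MF) := by gcongr
    _ = _ := by simp only [B, c]; ring

end HasInteriorLinftyEstimate

theorem stmt18_general (d : ℕ) (q : ℝ) (hq : 2 < q) (C₁ : ℝ) (hC₁ : 0 < C₁) :
    ∃ C : ℝ, 0 < C ∧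
    ∀ (Ω : Set (EuclideanSpace ℝ (Fin d))), IsOpen Ω → Bornology.IsBounded Ω →
    ∀ (lam : ℂ) (u F : Fin d → EuclideanSpace ℝ (Fin d) → ℂ) (MF : ℝ),
      -- F ∈ L^∞(Ω) with ‖F‖_{L^∞} ≤ MF
      (∀ x ∈ Ω, vnorm F x ≤ MF) →
      -- local square-integrability of u
      (∀ (x : EuclideanSpace ℝ (Fin d)) (r : ℝ), 0 < r → ball x (2 * r) ⊆ Ω →
        IntegrableOn (fun y => vnorm u y ^ 2) (ball x (2 * r))) →
      -- hypothesis: interior Stokes regularity, L^{q₁} → L^{q₂} form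
      (∀ (x : EuclideanSpace ℝ (Fin d)) (r : ℝ), 0 < r → ball x (2 * r) ⊆ Ω →
        ∀ q₁ q₂ : ℝ, 1 ≤ q₁ → q₁ < q₂ → 1 / q₂ = 1 / q₁ - 2 / d →
          (⨍ y in ball x r, vnorm u y ^ q₂) ^ (1 / q₂) ≤
            C₁ * ((⨍ y in ball x (2 * r), vnorm u y ^ 2) ^ ((1 : ℝ) / 2) +
              r ^ 2 * (⨍ y in ball x (2 * r),
                vnorm (fun i z => F i z - lam * u i z) y ^ q₁) ^ (1 / q₁))) →
      -- hypothesis: its L^∞ endpoint at exponent q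
      (∀ (x : EuclideanSpace ℝ (Fin d)) (r : ℝ), 0 < r → ball x (2 * r) ⊆ Ω →
        ∀ y ∈ ball x r, vnorm u y ≤
          C₁ * ((⨍ z in ball x (2 * r), vnorm u z ^ 2) ^ ((1 : ℝ) / 2) +
            r ^ 2 * (⨍ z in ball x (2 * r),
              vnorm (fun i w => F i w - lam * u i w) z ^ q) ^ (1 / q))) →
      -- conclusion
      ∀ (x : EuclideanSpace ℝ (Fin d)) (r : ℝ), 0 < r → ball x (2 * r) ⊆ Ω →
        ∀ y ∈ ball x r, vnorm u y ≤
          C * (1 + r ^ 2 * ‖lam‖) ^ (d + 1) *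
            ((⨍ z in ball x (2 * r), vnorm u z ^ 2) ^ ((1 : ℝ) / 2) + r ^ 2 * MF) := by
  refine ⟨2 * C₁ * ((2 ^ (d + 3) * (C₁ + 1)) ^ d + 1), by positivity, ?_⟩
  intro Ω hΩ _ lam u F MF hF hInt _ hEnd x r hr hball y hy
  exact HasInteriorLinftyEstimate.vnorm_le hEnd hΩ (by linarith) hC₁.le hF hr hball
    (hInt x r hr hball) hy

/-- Local `L²`-to-`L^∞` bound by bootstrapping for the Stokes resolvent.
Suppose `u` satisfies the interior regularity estimates for the stationary Stokes system
with right-hand side `F - λu` (the `L^{q₁}`-to-`L^{q₂}` improvement with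
`1/q₂ = 1/q₁ - 2/d`, together with its `L^∞` endpoint at exponent `q > 2`), on every ball
`B(x,2r) ⊆ Ω`.  Then whenever `B(x,2r) ⊆ Ω` and `|F| ≤ M_F` on `Ω`,
`‖u‖_{L^∞(B(x,r))} ≤ C (1 + r²|λ|)^{d+1} [(⨍_{B(x,2r)} |u|²)^{1/2} + r² M_F]`,
where `C` depends only on `d` and `q` (and the constant `C₁` in the hypothesis). -/
theorem stmt18 (d : ℕ) (hd : 1 ≤ d) (q : ℝ) (hq : 2 < q) (C₁ : ℝ) (hC₁ : 0 < C₁) :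
    ∃ C : ℝ, 0 < C ∧
    ∀ (Ω : Set (EuclideanSpace ℝ (Fin d))), IsOpen Ω → Bornology.IsBounded Ω →
    ∀ (lam : ℂ) (u F : Fin d → EuclideanSpace ℝ (Fin d) → ℂ) (MF : ℝ),
      -- F ∈ L^∞(Ω) with ‖F‖_{L^∞} ≤ MF
      (∀ x ∈ Ω, vnorm F x ≤ MF) →
      -- local square-integrability of u
      (∀ (x : EuclideanSpace ℝ (Fin d)) (r : ℝ), 0 < r → ball x (2 * r) ⊆ Ω →
        IntegrableOn (fun y => vnorm u y ^ 2) (ball x (2 * r))) →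
      -- hypothesis: interior Stokes regularity, L^{q₁} → L^{q₂} form
      (∀ (x : EuclideanSpace ℝ (Fin d)) (r : ℝ), 0 < r → ball x (2 * r) ⊆ Ω →
        ∀ q₁ q₂ : ℝ, 1 ≤ q₁ → q₁ < q₂ → 1 / q₂ = 1 / q₁ - 2 / d →
          (⨍ y in ball x r, vnorm u y ^ q₂) ^ (1 / q₂) ≤
            C₁ * ((⨍ y in ball x (2 * r), vnorm u y ^ 2) ^ ((1 : ℝ) / 2) +
              r ^ 2 * (⨍ y in ball x (2 * r),
                vnorm (fun i z => F i z - lam * u i z) y ^ q₁) ^ (1 / q₁))) →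
      -- hypothesis: its L^∞ endpoint at exponent q
      (∀ (x : EuclideanSpace ℝ (Fin d)) (r : ℝ), 0 < r → ball x (2 * r) ⊆ Ω →
        ∀ y ∈ ball x r, vnorm u y ≤
          C₁ * ((⨍ z in ball x (2 * r), vnorm u z ^ 2) ^ ((1 : ℝ) / 2) +
            r ^ 2 * (⨍ z in ball x (2 * r),
              vnorm (fun i w => F i w - lam * u i w) z ^ q) ^ (1 / q))) →
      -- conclusion
      ∀ (x : EuclideanSpace ℝ (Fin d)) (r : ℝ), 0 < r → ball x (2 * r) ⊆ Ω →
        ∀ y ∈ ball x r, vnorm u y ≤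
          C * (1 + r ^ 2 * ‖lam‖) ^ (d + 1) *
            ((⨍ z in ball x (2 * r), vnorm u z ^ 2) ^ ((1 : ℝ) / 2) + r ^ 2 * MF) :=
  stmt18_general d q hq C₁ hC₁
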